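/- arXiv:1608.08754 — 6 statements merged into one kernel-verified Lean document; each statement's English description precedes it below -/
import Mathlib

section
/- For all natural numbers n and m and every tolerance δ with 0 < δ < 1, and for all real exponents α and β with 0 < β < α ≤ 1, the confidence obtained with effectiveness exponent α is at most the confidence obtained with effectiveness exponent β; that is, (∫₀^δ θ^{α·m}·(1−θ^α)^n dθ)/(∫₀^1 θ^{α·m}·(1−θ^α)^n dθ) ≤ (∫₀^δ θ^{β·m}·(1−θ^β)^n dθ)/(∫₀^1 θ^{β·m}·(1−θ^β)^n dθ). -/
open MeasureTheory intervalIntegral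
open Set

lemma my_amgm {α β t : ℝ} (hβ0 : 0 < β) (hβα : β < α) (ht0 : 0 ≤ t) :
    α * t ^ (α - β) ≤ (α - β) * t ^ α + β := by
  have hα0 : 0 < α := hβ0.trans hβα
  have hw1 : (0:ℝ) ≤ (α - β)/α := div_nonneg (by linarith) hα0.le
  have h := Real.geom_mean_le_arith_mean2_weighted
    (w₁ := (α - β)/α) (w₂ := β/α) (p₁ := t ^ α) (p₂ := 1)
    hw1 (by positivity) (Real.rpow_nonneg ht0 α) zero_le_one
    (by field_simp; ring)
  rw [Real.one_rpow, mul_one, ← Real.rpow_mul ht0] at h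
  have he : α * ((α - β)/α) = α - β := by field_simp
  rw [he] at h
  have h2 := mul_le_mul_of_nonneg_left h hα0.le
  calc α * t ^ (α - β) ≤ α * ((α - β)/α * t ^ α + β/α * 1) := h2
    _ = (α - β) * t ^ α + β := by field_simp

lemma my_mono {α β : ℝ} (hβ0 : 0 < β) (hβα : β < α) :
    MonotoneOn (fun t : ℝ => (1 - t ^ α) / (1 - t ^ β)) (Ico (0:ℝ) 1) := by
  have hα0 : 0 < α := hβ0.trans hβα
  have hden : ∀ x ∈ Ico (0:ℝ) 1, (1 : ℝ) - x ^ β ≠ 0 := fun x hx =>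
    (sub_pos.2 (Real.rpow_lt_one hx.1 hx.2 hβ0)).ne'
  have hder : ∀ t ∈ Ioo (0:ℝ) 1, HasDerivAt (fun t : ℝ => (1 - t ^ α) / (1 - t ^ β))
      ((-(α * t ^ (α-1)) * (1 - t ^ β) - (1 - t ^ α) * (-(β * t ^ (β-1)))) / (1 - t ^ β) ^ 2) t := by
    intro t ht
    have h1 : HasDerivAt (fun s : ℝ => 1 - s ^ α) (-(α * t ^ (α-1))) t :=
      (Real.hasDerivAt_rpow_const (Or.inl ht.1.ne')).const_sub 1
    have h2 : HasDerivAt (fun s : ℝ => 1 - s ^ β) (-(β * t ^ (β-1))) t :=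
      (Real.hasDerivAt_rpow_const (Or.inl ht.1.ne')).const_sub 1
    exact h1.div h2 (hden t (Ioo_subset_Ico_self ht))
  have hcont : ContinuousOn (fun t : ℝ => (1 - t ^ α) / (1 - t ^ β)) (Ico (0:ℝ) 1) := by
    apply ContinuousOn.div
    · exact continuousOn_const.sub (continuousOn_id.rpow_const fun x _ => Or.inr hα0.le)
    · exact continuousOn_const.sub (continuousOn_id.rpow_const fun x _ => Or.inr hβ0.le)
    · exact hden
  apply monotoneOn_of_deriv_nonneg (convex_Ico 0 1) hcont
  · rw [interior_Ico]
    exact fun t ht => ((hder t ht).differentiableAt).differentiableWithinAt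
  · rw [interior_Ico]
    intro t ht
    rw [(hder t ht).deriv]
    apply div_nonneg _ (sq_nonneg _)
    -- numerator nonneg
    have ht0 : (0:ℝ) < t := ht.1
    have he : t ^ (α-1) = t ^ (β-1) * t ^ (α-β) := by
      rw [← Real.rpow_add ht0]; ring_nf
    have hca : t ^ (α-β) * t ^ β = t ^ α := by
      rw [← Real.rpow_add ht0]; ring_nf
    have hd0 : (0:ℝ) ≤ t ^ (β-1) := Real.rpow_nonneg ht0.le _
    have hAM := my_amgm hβ0 hβα ht0.le
    have key : 0 ≤ t ^ (β-1) * (((α-β) * t ^ α + β) - α * t ^ (α-β)) :=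
      mul_nonneg hd0 (by linarith)
    have expand : -(α * t ^ (α-1)) * (1 - t ^ β) - (1 - t ^ α) * (-(β * t ^ (β-1)))
        = t ^ (β-1) * (((α-β) * t ^ α + β) - α * t ^ (α-β)) := by
      rw [he, ← hca]; ring
    rw [expand]; exact key

lemma my_key {α β x y : ℝ} (hβ0 : 0 < β) (hβα : β < α)
    (hx0 : 0 ≤ x) (hxy : x ≤ y) (hy1 : y ≤ 1) :
    (1 - x ^ α) * (1 - y ^ β) ≤ (1 - x ^ β) * (1 - y ^ α) := by
  rcases eq_or_lt_of_le hy1 with h1 | h1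
  · subst h1; simp [Real.one_rpow]
  · have hx : x ∈ Ico (0:ℝ) 1 := ⟨hx0, lt_of_le_of_lt hxy h1⟩
    have hy : y ∈ Ico (0:ℝ) 1 := ⟨hx0.trans hxy, h1⟩
    have h := my_mono hβ0 hβα hx hy hxy
    have hdx : (0:ℝ) < 1 - x ^ β := sub_pos.2 (Real.rpow_lt_one hx.1 hx.2 hβ0)
    have hdy : (0:ℝ) < 1 - y ^ β := sub_pos.2 (Real.rpow_lt_one hy.1 hy.2 hβ0)
    rw [div_le_div_iff₀ hdx hdy] at h
    linarith

lemma my_pointwise {α β : ℝ} (n m : ℕ) (hβ0 : 0 < β) (hβα : β < α) {x y : ℝ}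
    (hx0 : 0 ≤ x) (hxy : x ≤ y) (hy1 : y ≤ 1) :
    x ^ (α * (m:ℝ)) * (1 - x ^ α) ^ n * (y ^ (β * (m:ℝ)) * (1 - y ^ β) ^ n) ≤
    x ^ (β * (m:ℝ)) * (1 - x ^ β) ^ n * (y ^ (α * (m:ℝ)) * (1 - y ^ α) ^ n) := by
  have hα0 : 0 < α := hβ0.trans hβα
  have hy0 : 0 ≤ y := hx0.trans hxy
  have hx1 : x ≤ 1 := hxy.trans hy1
  have part1 : x ^ (α * (m:ℝ)) * y ^ (β * (m:ℝ)) ≤ x ^ (β * (m:ℝ)) * y ^ (α * (m:ℝ)) := by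
    rcases Nat.eq_zero_or_pos m with hm | hm
    · subst hm; simp
    · have hm0 : (0:ℝ) < (m:ℝ) := Nat.cast_pos.2 hm
      rcases eq_or_lt_of_le hx0 with hx | hx
      · rw [← hx, Real.zero_rpow (by positivity : α * (m:ℝ) ≠ 0),
          Real.zero_rpow (by positivity : β * (m:ℝ) ≠ 0)]
        simp
      · have hy0' : (0:ℝ) < y := lt_of_lt_of_le hx hxy
        have hsplit : α * (m:ℝ) = β * (m:ℝ) + (α - β) * (m:ℝ) := by ring
        rw [hsplit, Real.rpow_add hx, Real.rpow_add hy0']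
        have key : x ^ ((α - β) * (m:ℝ)) ≤ y ^ ((α - β) * (m:ℝ)) :=
          Real.rpow_le_rpow hx0 hxy (mul_nonneg (by linarith) hm0.le)
        have h2 : x ^ (β * (m:ℝ)) * y ^ (β * (m:ℝ)) * x ^ ((α - β) * (m:ℝ)) ≤
            x ^ (β * (m:ℝ)) * y ^ (β * (m:ℝ)) * y ^ ((α - β) * (m:ℝ)) :=
          mul_le_mul_of_nonneg_left key (by positivity)
        calc x ^ (β * (m:ℝ)) * x ^ ((α - β) * (m:ℝ)) * y ^ (β * (m:ℝ))
            = x ^ (β * (m:ℝ)) * y ^ (β * (m:ℝ)) * x ^ ((α - β) * (m:ℝ)) := by ring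
          _ ≤ x ^ (β * (m:ℝ)) * y ^ (β * (m:ℝ)) * y ^ ((α - β) * (m:ℝ)) := h2
          _ = x ^ (β * (m:ℝ)) * (y ^ (β * (m:ℝ)) * y ^ ((α - β) * (m:ℝ))) := by ring
  have part2 : (1 - x ^ α) ^ n * (1 - y ^ β) ^ n ≤ (1 - x ^ β) ^ n * (1 - y ^ α) ^ n := by
    rw [← mul_pow, ← mul_pow]
    apply pow_le_pow_left₀ _ (my_key hβ0 hβα hx0 hxy hy1)
    exact mul_nonneg (sub_nonneg.2 (Real.rpow_le_one hx0 hx1 hα0.le))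
      (sub_nonneg.2 (Real.rpow_le_one hy0 hy1 hβ0.le))
  have e1 : x ^ (α * (m:ℝ)) * (1 - x ^ α) ^ n * (y ^ (β * (m:ℝ)) * (1 - y ^ β) ^ n)
      = (x ^ (α * (m:ℝ)) * y ^ (β * (m:ℝ))) * ((1 - x ^ α) ^ n * (1 - y ^ β) ^ n) := by ring
  have e2 : x ^ (β * (m:ℝ)) * (1 - x ^ β) ^ n * (y ^ (α * (m:ℝ)) * (1 - y ^ α) ^ n)
      = (x ^ (β * (m:ℝ)) * y ^ (α * (m:ℝ))) * ((1 - x ^ β) ^ n * (1 - y ^ α) ^ n) := by ring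
  rw [e1, e2]
  apply mul_le_mul part1 part2
  · exact mul_nonneg (pow_nonneg (sub_nonneg.2 (Real.rpow_le_one hx0 hx1 hα0.le)) n)
      (pow_nonneg (sub_nonneg.2 (Real.rpow_le_one hy0 hy1 hβ0.le)) n)
  · positivity

theorem confidence_mono_in_effectiveness
    (n m : ℕ) (δ α β : ℝ)
    (hδ0 : 0 < δ) (hδ1 : δ < 1)
    (hβ0 : 0 < β) (hβα : β < α) (hα1 : α ≤ 1) :
    (∫ θ in (0:ℝ)..δ, θ ^ (α * (m : ℝ)) * (1 - θ ^ α) ^ n) /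
      (∫ θ in (0:ℝ)..1, θ ^ (α * (m : ℝ)) * (1 - θ ^ α) ^ n) ≤
    (∫ θ in (0:ℝ)..δ, θ ^ (β * (m : ℝ)) * (1 - θ ^ β) ^ n) /
      (∫ θ in (0:ℝ)..1, θ ^ (β * (m : ℝ)) * (1 - θ ^ β) ^ n) := by
  have hα0 : 0 < α := hβ0.trans hβα
  set F : ℝ → ℝ := fun θ => θ ^ (α * (m : ℝ)) * (1 - θ ^ α) ^ n with hF
  set G : ℝ → ℝ := fun θ => θ ^ (β * (m : ℝ)) * (1 - θ ^ β) ^ n with hG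
  have hcont : ∀ γ : ℝ, 0 < γ → ContinuousOn (fun θ : ℝ => θ ^ (γ * (m : ℝ)) * (1 - θ ^ γ) ^ n)
      (Icc (0:ℝ) 1) := by
    intro γ hγ
    exact (continuousOn_id.rpow_const fun x _ => Or.inr (by positivity)).mul
      ((continuousOn_const.sub (continuousOn_id.rpow_const fun x _ => Or.inr hγ.le)).pow n)
  have hsub : ∀ a b : ℝ, 0 ≤ a → a ≤ b → b ≤ 1 → uIcc a b ⊆ Icc (0:ℝ) 1 := by
    intro a b ha hab hb1
    rw [uIcc_of_le hab]
    exact Icc_subset_Icc ha hb1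
  have hF0δ : IntervalIntegrable F volume 0 δ :=
    (((hcont α hα0).mono (hsub 0 δ le_rfl hδ0.le hδ1.le))).intervalIntegrable
  have hFδ1 : IntervalIntegrable F volume δ 1 :=
    (((hcont α hα0).mono (hsub δ 1 hδ0.le hδ1.le le_rfl))).intervalIntegrable
  have hG0δ : IntervalIntegrable G volume 0 δ :=
    (((hcont β hβ0).mono (hsub 0 δ le_rfl hδ0.le hδ1.le))).intervalIntegrable
  have hGδ1 : IntervalIntegrable G volume δ 1 :=
    (((hcont β hβ0).mono (hsub δ 1 hδ0.le hδ1.le le_rfl))).intervalIntegrable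
  have hF01 : IntervalIntegrable F volume 0 1 := hF0δ.trans hFδ1
  have hG01 : IntervalIntegrable G volume 0 1 := hG0δ.trans hGδ1
  have hpos : ∀ γ : ℝ, 0 < γ → ∀ x : ℝ, 0 < x → x < 1 →
      0 < x ^ (γ * (m : ℝ)) * (1 - x ^ γ) ^ n := by
    intro γ hγ x hx0 hx1
    have h1 : 0 < x ^ (γ * (m : ℝ)) := Real.rpow_pos_of_pos hx0 _
    have h2 : 0 < 1 - x ^ γ := sub_pos.2 (Real.rpow_lt_one hx0.le hx1 hγ)
    positivity
  have hFden : 0 < ∫ θ in (0:ℝ)..1, F θ :=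
    intervalIntegral_pos_of_pos_on hF01 (fun x hx => hpos α hα0 x hx.1 hx.2) zero_lt_one
  have hGden : 0 < ∫ θ in (0:ℝ)..1, G θ :=
    intervalIntegral_pos_of_pos_on hG01 (fun x hx => hpos β hβ0 x hx.1 hx.2) zero_lt_one
  have hFsplit : (∫ θ in (0:ℝ)..δ, F θ) + (∫ θ in δ..1, F θ) = ∫ θ in (0:ℝ)..1, F θ :=
    integral_add_adjacent_intervals hF0δ hFδ1
  have hGsplit : (∫ θ in (0:ℝ)..δ, G θ) + (∫ θ in δ..1, G θ) = ∫ θ in (0:ℝ)..1, G θ :=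
    integral_add_adjacent_intervals hG0δ hGδ1
  have step4 : ∀ y ∈ Icc δ 1, (∫ θ in (0:ℝ)..δ, F θ) * G y ≤ (∫ θ in (0:ℝ)..δ, G θ) * F y := by
    intro y hy
    calc (∫ θ in (0:ℝ)..δ, F θ) * G y = ∫ x in (0:ℝ)..δ, F x * G y :=
          (intervalIntegral.integral_mul_const (G y) F).symm
      _ ≤ ∫ x in (0:ℝ)..δ, G x * F y := by
          apply integral_mono_on hδ0.le (hF0δ.mul_const _) (hG0δ.mul_const _)
          intro x hx
          exact my_pointwise n m hβ0 hβα hx.1 (hx.2.trans hy.1) hy.2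
      _ = (∫ θ in (0:ℝ)..δ, G θ) * F y := intervalIntegral.integral_mul_const (F y) G
  have step5 : (∫ θ in (0:ℝ)..δ, F θ) * (∫ θ in δ..1, G θ) ≤
      (∫ θ in (0:ℝ)..δ, G θ) * (∫ θ in δ..1, F θ) := by
    calc (∫ θ in (0:ℝ)..δ, F θ) * (∫ θ in δ..1, G θ)
        = ∫ y in δ..1, (∫ θ in (0:ℝ)..δ, F θ) * G y := (intervalIntegral.integral_const_mul _ G).symm
      _ ≤ ∫ y in δ..1, (∫ θ in (0:ℝ)..δ, G θ) * F y :=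
          integral_mono_on hδ1.le (hGδ1.const_mul _) (hFδ1.const_mul _) step4
      _ = (∫ θ in (0:ℝ)..δ, G θ) * (∫ θ in δ..1, F θ) := intervalIntegral.integral_const_mul _ F
  rw [div_le_div_iff₀ hFden hGden, ← hFsplit, ← hGsplit]
  nlinarith [step5]
end

section
/- For every tolerance δ with 0 < δ < 1 and every fixed natural number m, the confidence c(n,m,δ) = (∫₀^δ θ^m·(1−θ)^n dθ)/(∫₀^1 θ^m·(1−θ)^n dθ) tends to 1 as n → ∞. In particular c(n,0,δ) → 1 as n → ∞, and for any m > 0, c(n,m,δ) → 1 as n/m → ∞ with m held fixed. -/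
open MeasureTheory intervalIntegral Filter

theorem confidence_tendsto_one
    (m : ℕ) (δ : ℝ) (hδ0 : 0 < δ) (hδ1 : δ < 1) :
    Tendsto
      (fun n : ℕ =>
        (∫ θ in (0:ℝ)..δ, θ ^ m * (1 - θ) ^ n) /
          (∫ θ in (0:ℝ)..1, θ ^ m * (1 - θ) ^ n))
      atTop (nhds 1) := by
  have hcont : ∀ n : ℕ, Continuous (fun θ : ℝ => θ ^ m * (1 - θ) ^ n) := by
    intro n; continuity
  have hint : ∀ (n : ℕ) (x y : ℝ),
      IntervalIntegrable (fun θ : ℝ => θ ^ m * (1 - θ) ^ n) volume x y :=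
    fun n x y => (hcont n).intervalIntegrable x y
  set N : ℕ → ℝ := fun n => ∫ θ in (0:ℝ)..δ, θ ^ m * (1 - θ) ^ n with hN
  set T : ℕ → ℝ := fun n => ∫ θ in δ..(1:ℝ), θ ^ m * (1 - θ) ^ n with hTdef
  set D : ℕ → ℝ := fun n => ∫ θ in (0:ℝ)..(1:ℝ), θ ^ m * (1 - θ) ^ n with hDdef
  have hND : ∀ n, N n + T n = D n := fun n =>
    intervalIntegral.integral_add_adjacent_intervals (hint n 0 δ) (hint n δ 1)
  -- tail bound
  have hT : ∀ n, T n ≤ (1 - δ) ^ (n + 1) := by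
    intro n
    have h1 : T n ≤ ∫ _θ in δ..(1:ℝ), (1 - δ) ^ n := by
      apply intervalIntegral.integral_mono_on hδ1.le (hint n δ 1) intervalIntegrable_const
      intro θ hθ
      obtain ⟨ha, hb⟩ := hθ
      have hθ0 : 0 ≤ θ := le_trans hδ0.le ha
      calc θ ^ m * (1 - θ) ^ n ≤ 1 * (1 - δ) ^ n := by
            apply mul_le_mul
            · exact pow_le_one₀ hθ0 hb
            · exact pow_le_pow_left₀ (by linarith) (by linarith) n
            · exact pow_nonneg (by linarith) n
            · norm_num
        _ = (1 - δ) ^ n := one_mul _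
    have h2 : (∫ _θ in δ..(1:ℝ), (1 - δ) ^ n) = (1 - δ) ^ (n + 1) := by
      rw [intervalIntegral.integral_const, smul_eq_mul, pow_succ]
      ring
    linarith
  -- lower bound on D
  have h34 : (0:ℝ) < 1 - 3 * δ / 4 := by linarith
  have hD : ∀ n, (δ / 4) * (δ / 2) ^ m * (1 - 3 * δ / 4) ^ n ≤ D n := by
    intro n
    have hsplit1 : D n = (∫ θ in (0:ℝ)..(δ/2), θ ^ m * (1 - θ) ^ n)
        + ∫ θ in (δ/2)..(1:ℝ), θ ^ m * (1 - θ) ^ n :=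
      (intervalIntegral.integral_add_adjacent_intervals (hint n 0 (δ/2)) (hint n (δ/2) 1)).symm
    have hsplit2 : (∫ θ in (δ/2)..(1:ℝ), θ ^ m * (1 - θ) ^ n)
        = (∫ θ in (δ/2)..(3*δ/4), θ ^ m * (1 - θ) ^ n)
        + ∫ θ in (3*δ/4)..(1:ℝ), θ ^ m * (1 - θ) ^ n :=
      (intervalIntegral.integral_add_adjacent_intervals (hint n (δ/2) (3*δ/4)) (hint n (3*δ/4) 1)).symm
    have hnn1 : 0 ≤ ∫ θ in (0:ℝ)..(δ/2), θ ^ m * (1 - θ) ^ n := by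
      apply intervalIntegral.integral_nonneg (by linarith)
      intro θ hθ
      exact mul_nonneg (pow_nonneg hθ.1 m) (pow_nonneg (by linarith [hθ.2]) n)
    have hnn2 : 0 ≤ ∫ θ in (3*δ/4)..(1:ℝ), θ ^ m * (1 - θ) ^ n := by
      apply intervalIntegral.integral_nonneg (by linarith)
      intro θ hθ
      have h0 : (0:ℝ) ≤ θ := le_trans (by linarith) hθ.1
      exact mul_nonneg (pow_nonneg h0 m) (pow_nonneg (by linarith [hθ.2]) n)
    have hmid : (δ / 4) * ((δ / 2) ^ m * (1 - 3 * δ / 4) ^ n)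
        ≤ ∫ θ in (δ/2)..(3*δ/4), θ ^ m * (1 - θ) ^ n := by
      have h1 : (∫ _θ in (δ/2)..(3*δ/4), (δ / 2) ^ m * (1 - 3 * δ / 4) ^ n)
          ≤ ∫ θ in (δ/2)..(3*δ/4), θ ^ m * (1 - θ) ^ n := by
        apply intervalIntegral.integral_mono_on (by linarith) intervalIntegrable_const
          (hint n (δ/2) (3*δ/4))
        intro θ hθ
        have h0 : (0:ℝ) ≤ δ/2 := by linarith
        apply mul_le_mul
        · exact pow_le_pow_left₀ h0 hθ.1 m
        · exact pow_le_pow_left₀ (by linarith) (by linarith [hθ.2]) n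
        · exact pow_nonneg (by linarith) n
        · exact pow_nonneg (le_trans h0 hθ.1) m
      have h2 : (∫ _θ in (δ/2)..(3*δ/4), (δ / 2) ^ m * (1 - 3 * δ / 4) ^ n)
          = (δ / 4) * ((δ / 2) ^ m * (1 - 3 * δ / 4) ^ n) := by
        rw [intervalIntegral.integral_const, smul_eq_mul]
        ring_nf
      linarith
    rw [hsplit1, hsplit2]
    nlinarith [hmid, hnn1, hnn2]
  have hDpos : ∀ n, 0 < D n := by
    intro n
    have : (0:ℝ) < (δ / 4) * (δ / 2) ^ m * (1 - 3 * δ / 4) ^ n := by positivity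
    linarith [hD n]
  have hTnn : ∀ n, 0 ≤ T n := by
    intro n
    apply intervalIntegral.integral_nonneg hδ1.le
    intro θ hθ
    have h0 : (0:ℝ) ≤ θ := le_trans hδ0.le hθ.1
    exact mul_nonneg (pow_nonneg h0 m) (pow_nonneg (by linarith [hθ.2]) n)
  -- constants
  set C : ℝ := (δ / 4) * (δ / 2) ^ m with hC
  have hCpos : 0 < C := by rw [hC]; positivity
  set r : ℝ := (1 - δ) / (1 - 3 * δ / 4) with hr
  have hr0 : 0 ≤ r := by apply div_nonneg <;> linarith
  have hr1 : r < 1 := by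
    rw [hr, div_lt_one h34]; linarith
  set K : ℝ := (1 - δ) / C with hK
  -- squeeze
  have hub : ∀ n, N n / D n ≤ 1 := by
    intro n
    rw [div_le_one (hDpos n)]
    linarith [hND n, hTnn n]
  have hlb : ∀ n, 1 - K * r ^ n ≤ N n / D n := by
    intro n
    have hTD : T n / D n ≤ K * r ^ n := by
      have h1 : T n / D n ≤ (1 - δ) ^ (n + 1) / (C * (1 - 3 * δ / 4) ^ n) := by
        apply div_le_div₀ (pow_nonneg (by linarith) (n+1)) (hT n) (by positivity) (hD n)
      have h2 : (1 - δ) ^ (n + 1) / (C * (1 - 3 * δ / 4) ^ n) = K * r ^ n := by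
        rw [hK, hr, div_pow, pow_succ]
        field_simp
      linarith
    have hNeq : N n / D n = 1 - T n / D n := by
      have h := hND n
      have : N n = D n - T n := by linarith
      rw [this, sub_div, div_self (hDpos n).ne']
    rw [hNeq]
    linarith
  have hlim : Tendsto (fun n : ℕ => 1 - K * r ^ n) atTop (nhds 1) := by
    have : Tendsto (fun n : ℕ => K * r ^ n) atTop (nhds 0) := by
      have := tendsto_pow_atTop_nhds_zero_of_lt_one hr0 hr1
      simpa using this.const_mul K
    simpa using tendsto_const_nhds.sub this
  exact tendsto_of_tendsto_of_tendsto_of_le_of_le hlim tendsto_const_nhds hlb hub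
end

section
/- Let f, g : [0,1] → ℝ≥0 be functions, integrable on [0,1], with g decreasing (antitone) on [0,1], and let δ ∈ (0,1). Assume the denominators ∫₀^1 f(θ)g(θ) dθ and ∫₀^1 f(θ) dθ are strictly positive. Then (∫₀^δ f(θ)·g(θ) dθ)/(∫₀^1 f(θ)·g(θ) dθ) ≥ (∫₀^δ f(θ) dθ)/(∫₀^1 f(θ) dθ). -/
open MeasureTheory intervalIntegral Set

theorem int_ratio_of_antitone_weight
    (f g : ℝ → ℝ)
    (hf0 : ∀ θ ∈ Icc (0:ℝ) 1, 0 ≤ f θ)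
    (hg0 : ∀ θ ∈ Icc (0:ℝ) 1, 0 ≤ g θ)
    (hfint : IntervalIntegrable f volume 0 1)
    (hfgint : IntervalIntegrable (fun θ => f θ * g θ) volume 0 1)
    (hg : AntitoneOn g (Icc (0:ℝ) 1))
    (δ : ℝ) (hδ0 : 0 < δ) (hδ1 : δ < 1)
    (hden1 : 0 < ∫ θ in (0:ℝ)..1, f θ * g θ)
    (hden2 : 0 < ∫ θ in (0:ℝ)..1, f θ) :
    (∫ θ in (0:ℝ)..δ, f θ * g θ) / (∫ θ in (0:ℝ)..1, f θ * g θ) ≥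
      (∫ θ in (0:ℝ)..δ, f θ) / (∫ θ in (0:ℝ)..1, f θ) := by
  have hδmem : δ ∈ Icc (0:ℝ) 1 := ⟨hδ0.le, hδ1.le⟩
  have hsub1 : uIcc (0:ℝ) δ ⊆ uIcc (0:ℝ) 1 := by
    apply uIcc_subset_uIcc left_mem_uIcc
    rw [uIcc_of_le (by norm_num)]; exact hδmem
  have hsub2 : uIcc δ (1:ℝ) ⊆ uIcc (0:ℝ) 1 := by
    apply uIcc_subset_uIcc _ right_mem_uIcc
    rw [uIcc_of_le (by norm_num)]; exact hδmem
  have hf1 : IntervalIntegrable f volume 0 δ := hfint.mono_set hsub1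
  have hf2 : IntervalIntegrable f volume δ 1 := hfint.mono_set hsub2
  have hfg1 : IntervalIntegrable (fun θ => f θ * g θ) volume 0 δ := hfgint.mono_set hsub1
  have hfg2 : IntervalIntegrable (fun θ => f θ * g θ) volume δ 1 := hfgint.mono_set hsub2
  set A := ∫ θ in (0:ℝ)..δ, f θ * g θ with hA
  set B := ∫ θ in δ..(1:ℝ), f θ * g θ with hB
  set C := ∫ θ in (0:ℝ)..δ, f θ with hC
  set D := ∫ θ in δ..(1:ℝ), f θ with hD
  have hsplitfg : (∫ θ in (0:ℝ)..1, f θ * g θ) = A + B :=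
    (integral_add_adjacent_intervals hfg1 hfg2).symm
  have hsplitf : (∫ θ in (0:ℝ)..1, f θ) = C + D :=
    (integral_add_adjacent_intervals hf1 hf2).symm
  have hgδ : 0 ≤ g δ := hg0 δ hδmem
  have hCpos : 0 ≤ C := by
    apply intervalIntegral.integral_nonneg hδ0.le
    intro u hu; exact hf0 u ⟨hu.1, hu.2.trans hδ1.le⟩
  have hDpos : 0 ≤ D := by
    apply intervalIntegral.integral_nonneg hδ1.le
    intro u hu; exact hf0 u ⟨hδ0.le.trans hu.1, hu.2⟩
  have hAge : g δ * C ≤ A := by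
    have h1 : (∫ θ in (0:ℝ)..δ, f θ * g δ) ≤ A := by
      apply intervalIntegral.integral_mono_on hδ0.le (hf1.mul_const _) hfg1
      intro x hx
      have hx1 : x ∈ Icc (0:ℝ) 1 := ⟨hx.1, hx.2.trans hδ1.le⟩
      exact mul_le_mul_of_nonneg_left (hg hx1 hδmem hx.2) (hf0 x hx1)
    calc g δ * C = ∫ θ in (0:ℝ)..δ, f θ * g δ := by
          rw [intervalIntegral.integral_mul_const]; ring
      _ ≤ A := h1
  have hBle : B ≤ g δ * D := by
    have h1 : B ≤ ∫ θ in δ..(1:ℝ), f θ * g δ := by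
      apply intervalIntegral.integral_mono_on hδ1.le hfg2 (hf2.mul_const _)
      intro x hx
      have hx1 : x ∈ Icc (0:ℝ) 1 := ⟨hδ0.le.trans hx.1, hx.2⟩
      exact mul_le_mul_of_nonneg_left (hg hδmem hx1 hx.1) (hf0 x hx1)
    calc B ≤ ∫ θ in δ..(1:ℝ), f θ * g δ := h1
      _ = g δ * D := by rw [intervalIntegral.integral_mul_const]; ring
  rw [ge_iff_le, div_le_div_iff₀ hden2 hden1, hsplitf, hsplitfg]
  nlinarith [mul_le_mul_of_nonneg_left hBle hCpos, mul_le_mul_of_nonneg_right hAge hDpos]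
end

section
/- Let f : [0,1] → ℝ≥0 be an integrable function, δ ∈ (0,1), and 0 < β < α ≤ 1 real numbers. Assume the denominators ∫₀^1 θ^α·f(θ) dθ and ∫₀^1 θ^β·f(θ) dθ are strictly positive. Then (∫₀^δ θ^α·f(θ) dθ)/(∫₀^1 θ^α·f(θ) dθ) ≤ (∫₀^δ θ^β·f(θ) dθ)/(∫₀^1 θ^β·f(θ) dθ). -/
open MeasureTheory intervalIntegral Set

theorem ratio_rpow_weight_mono
    (f : ℝ → ℝ)
    (hf0 : ∀ θ ∈ Icc (0:ℝ) 1, 0 ≤ f θ)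
    (hfint : IntervalIntegrable f volume 0 1)
    (δ α β : ℝ) (hδ0 : 0 < δ) (hδ1 : δ < 1)
    (hβ0 : 0 < β) (hβα : β < α) (hα1 : α ≤ 1)
    (hdenα : 0 < ∫ θ in (0:ℝ)..1, θ ^ α * f θ)
    (hdenβ : 0 < ∫ θ in (0:ℝ)..1, θ ^ β * f θ) :
    (∫ θ in (0:ℝ)..δ, θ ^ α * f θ) / (∫ θ in (0:ℝ)..1, θ ^ α * f θ) ≤
      (∫ θ in (0:ℝ)..δ, θ ^ β * f θ) / (∫ θ in (0:ℝ)..1, θ ^ β * f θ) := by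
  have hα0 : 0 < α := lt_trans hβ0 hβα
  set c : ℝ := δ ^ (α - β) with hc
  have hc0 : 0 < c := Real.rpow_pos_of_pos hδ0 _
  have hcontα : Continuous (fun θ : ℝ => θ ^ α) := by
    refine continuous_iff_continuousAt.2 fun x => ?_
    exact Real.continuousAt_rpow_const x α (Or.inr hα0.le)
  have hcontβ : Continuous (fun θ : ℝ => θ ^ β) := by
    refine continuous_iff_continuousAt.2 fun x => ?_
    exact Real.continuousAt_rpow_const x β (Or.inr hβ0.le)
  have hiα : IntervalIntegrable (fun θ => θ ^ α * f θ) volume 0 1 :=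
    hfint.continuousOn_mul hcontα.continuousOn
  have hiβ : IntervalIntegrable (fun θ => θ ^ β * f θ) volume 0 1 :=
    hfint.continuousOn_mul hcontβ.continuousOn
  have hδmem : δ ∈ uIcc (0:ℝ) 1 := by
    rw [uIcc_of_le (by norm_num)]
    exact ⟨hδ0.le, hδ1.le⟩
  have hsub1 : uIcc (0:ℝ) δ ⊆ uIcc (0:ℝ) 1 :=
    uIcc_subset_uIcc left_mem_uIcc hδmem
  have hsub2 : uIcc δ (1:ℝ) ⊆ uIcc (0:ℝ) 1 :=
    uIcc_subset_uIcc hδmem right_mem_uIcc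
  have hiα1 : IntervalIntegrable (fun θ => θ ^ α * f θ) volume 0 δ := hiα.mono_set hsub1
  have hiα2 : IntervalIntegrable (fun θ => θ ^ α * f θ) volume δ 1 := hiα.mono_set hsub2
  have hiβ1 : IntervalIntegrable (fun θ => θ ^ β * f θ) volume 0 δ := hiβ.mono_set hsub1
  have hiβ2 : IntervalIntegrable (fun θ => θ ^ β * f θ) volume δ 1 := hiβ.mono_set hsub2
  -- pointwise inequalities
  have h1 : (∫ θ in (0:ℝ)..δ, θ ^ α * f θ) ≤ ∫ θ in (0:ℝ)..δ, c * (θ ^ β * f θ) := by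
    refine intervalIntegral.integral_mono_on hδ0.le hiα1 (hiβ1.const_mul c) fun θ hθ => ?_
    have hfθ : 0 ≤ f θ := hf0 θ ⟨hθ.1, le_trans hθ.2 hδ1.le⟩
    rcases eq_or_lt_of_le hθ.1 with h0 | h0
    · rw [← h0, Real.zero_rpow (ne_of_gt hα0)]
      have : (0:ℝ) ^ β = 0 := Real.zero_rpow (ne_of_gt hβ0)
      rw [this]
      simp
    · have hsplit : θ ^ α = θ ^ β * θ ^ (α - β) := by
        rw [← Real.rpow_add h0]; ring_nf
      have hle : θ ^ (α - β) ≤ c :=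
        Real.rpow_le_rpow h0.le hθ.2 (by linarith)
      rw [hsplit]
      have hβnn : (0:ℝ) ≤ θ ^ β := Real.rpow_nonneg h0.le _
      nlinarith [mul_le_mul_of_nonneg_left hle hβnn]
  have h2 : (∫ θ in δ..(1:ℝ), c * (θ ^ β * f θ)) ≤ ∫ θ in δ..(1:ℝ), θ ^ α * f θ := by
    refine intervalIntegral.integral_mono_on hδ1.le (hiβ2.const_mul c) hiα2 fun θ hθ => ?_
    have hθ0 : 0 < θ := lt_of_lt_of_le hδ0 hθ.1
    have hfθ : 0 ≤ f θ := hf0 θ ⟨hθ0.le, hθ.2⟩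
    have hsplit : θ ^ α = θ ^ β * θ ^ (α - β) := by
      rw [← Real.rpow_add hθ0]; ring_nf
    have hle : c ≤ θ ^ (α - β) :=
      Real.rpow_le_rpow hδ0.le hθ.1 (by linarith)
    rw [hsplit]
    have hβnn : (0:ℝ) ≤ θ ^ β := Real.rpow_nonneg hθ0.le _
    nlinarith [mul_le_mul_of_nonneg_left hle hβnn]
  -- nonnegativity
  have hAβ : 0 ≤ ∫ θ in (0:ℝ)..δ, θ ^ β * f θ :=
    intervalIntegral.integral_nonneg hδ0.le fun θ hθ =>
      mul_nonneg (Real.rpow_nonneg hθ.1 _) (hf0 θ ⟨hθ.1, le_trans hθ.2 hδ1.le⟩)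
  have hAα : 0 ≤ ∫ θ in (0:ℝ)..δ, θ ^ α * f θ :=
    intervalIntegral.integral_nonneg hδ0.le fun θ hθ =>
      mul_nonneg (Real.rpow_nonneg hθ.1 _) (hf0 θ ⟨hθ.1, le_trans hθ.2 hδ1.le⟩)
  have hBβ : 0 ≤ ∫ θ in δ..(1:ℝ), θ ^ β * f θ :=
    intervalIntegral.integral_nonneg hδ1.le fun θ hθ =>
      mul_nonneg (Real.rpow_nonneg (le_trans hδ0.le hθ.1) _)
        (hf0 θ ⟨le_trans hδ0.le hθ.1, hθ.2⟩)
  -- additivity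
  have haddα : (∫ θ in (0:ℝ)..δ, θ ^ α * f θ) + (∫ θ in δ..(1:ℝ), θ ^ α * f θ)
      = ∫ θ in (0:ℝ)..1, θ ^ α * f θ :=
    intervalIntegral.integral_add_adjacent_intervals hiα1 hiα2
  have haddβ : (∫ θ in (0:ℝ)..δ, θ ^ β * f θ) + (∫ θ in δ..(1:ℝ), θ ^ β * f θ)
      = ∫ θ in (0:ℝ)..1, θ ^ β * f θ :=
    intervalIntegral.integral_add_adjacent_intervals hiβ1 hiβ2
  rw [intervalIntegral.integral_const_mul] at h1 h2
  rw [div_le_div_iff₀ hdenα hdenβ, ← haddα, ← haddβ]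
  nlinarith [mul_le_mul_of_nonneg_right h1 hBβ, mul_le_mul_of_nonneg_left h2 hAβ]
end

section
/- Let f : [0,1] → ℝ≥0 be an integrable function, δ ∈ (0,1), and 0 < β < α ≤ 1 real numbers. Assume the denominators ∫₀^1 (1−θ^α)·f(θ) dθ and ∫₀^1 (1−θ^β)·f(θ) dθ are strictly positive. Then (∫₀^δ (1−θ^α)·f(θ) dθ)/(∫₀^1 (1−θ^α)·f(θ) dθ) ≤ (∫₀^δ (1−θ^β)·f(θ) dθ)/(∫₀^1 (1−θ^β)·f(θ) dθ). -/
open MeasureTheory intervalIntegral Set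

lemma amgm_step (α β y : ℝ) (hβ0 : 0 < β) (hβα : β < α) (hy0 : 0 ≤ y) :
    α * y ^ (α - β) ≤ β + (α - β) * y ^ α := by
  have hα0 : 0 < α := hβ0.trans hβα
  have h := Real.geom_mean_le_arith_mean2_weighted
    (w₁ := β/α) (w₂ := (α-β)/α) (p₁ := 1) (p₂ := y^α)
    (by positivity) (div_nonneg (by linarith) hα0.le)
    (by norm_num) (Real.rpow_nonneg hy0 α)
    (by field_simp; ring)
  rw [Real.one_rpow, one_mul, ← Real.rpow_mul hy0, mul_div_cancel₀ _ hα0.ne'] at h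
  have h2 : α * (β / α * 1 + (α - β) / α * y ^ α) = β + (α - β) * y ^ α := by
    field_simp
  nlinarith [mul_le_mul_of_nonneg_left h hα0.le]

lemma rpow_key (α β : ℝ) (hβ0 : 0 < β) (hβα : β < α) {x y : ℝ}
    (hx : 0 ≤ x) (hxy : x ≤ y) (hy : y ≤ 1) :
    (1 - x ^ α) * (1 - y ^ β) ≤ (1 - y ^ α) * (1 - x ^ β) := by
  have hα0 : 0 < α := hβ0.trans hβα
  have hy0 : (0:ℝ) ≤ y := hx.trans hxy
  rcases eq_or_lt_of_le hy0 with h0 | hy0'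
  · have hx0 : x = 0 := le_antisymm (h0 ▸ hxy) hx
    subst hx0; rw [← h0]
  set g : ℝ → ℝ := fun t => (1 - y ^ α) * (1 - t ^ β) - (1 - y ^ β) * (1 - t ^ α) with hgdef
  have key : ∀ t ∈ Ioo (0:ℝ) y, HasDerivAt g
      (-((1 - y ^ α) * (β * t ^ (β - 1))) + (1 - y ^ β) * (α * t ^ (α - 1))) t := by
    intro t ht
    have h1 : HasDerivAt (fun t : ℝ => t ^ β) (β * t ^ (β-1)) t :=
      Real.hasDerivAt_rpow_const (p := β) (Or.inl ht.1.ne')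
    have h2 : HasDerivAt (fun t : ℝ => t ^ α) (α * t ^ (α-1)) t :=
      Real.hasDerivAt_rpow_const (p := α) (Or.inl ht.1.ne')
    have h3 := (((h1.const_sub 1).const_mul (1 - y ^ α)).sub
      ((h2.const_sub 1).const_mul (1 - y ^ β)))
    rw [show -((1 - y ^ α) * (β * t ^ (β - 1))) + (1 - y ^ β) * (α * t ^ (α - 1)) =
      (1 - y ^ α) * -(β * t ^ (β - 1)) - (1 - y ^ β) * -(α * t ^ (α - 1)) by ring]
    exact h3
  have cont : ContinuousOn g (Icc 0 y) := by
    have c1 : Continuous fun t : ℝ => t ^ β :=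
      continuous_iff_continuousAt.mpr fun t => Real.continuousAt_rpow_const t β (Or.inr hβ0.le)
    have c2 : Continuous fun t : ℝ => t ^ α :=
      continuous_iff_continuousAt.mpr fun t => Real.continuousAt_rpow_const t α (Or.inr hα0.le)
    exact (Continuous.sub (continuous_const.mul (continuous_const.sub c1))
      (continuous_const.mul (continuous_const.sub c2))).continuousOn
  have anti : AntitoneOn g (Icc 0 y) := by
    apply antitoneOn_of_deriv_nonpos (convex_Icc 0 y) cont
    · rw [interior_Icc]
      exact fun t ht => ((key t ht).differentiableAt).differentiableWithinAt
    · rw [interior_Icc]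
      intro t ht
      rw [(key t ht).deriv]
      have ht0 : 0 < t := ht.1
      have hty : t ≤ y := ht.2.le
      have hyβ1 : y ^ β ≤ 1 := Real.rpow_le_one hy0 hy hβ0.le
      have hamgm := amgm_step α β y hβ0 hβα hy0
      have hsplit : y ^ (α - β) * y ^ β = y ^ α := by
        rw [← Real.rpow_add hy0']; ring_nf
      -- α y^(α-β) (1 - y^β) ≤ β (1 - y^α)
      have hstep : α * y ^ (α - β) * (1 - y ^ β) ≤ β * (1 - y ^ α) := by nlinarith
      -- t^(α-β) ≤ y^(α-β)
      have hmono : t ^ (α - β) ≤ y ^ (α - β) :=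
        Real.rpow_le_rpow ht0.le hty (by linarith)
      have hstep2 : α * t ^ (α - β) * (1 - y ^ β) ≤ β * (1 - y ^ α) := by
        have h0 : (0:ℝ) ≤ α * (1 - y ^ β) := mul_nonneg hα0.le (by linarith)
        nlinarith [mul_le_mul_of_nonneg_right hmono h0]
      have htβ : (0:ℝ) < t ^ (β - 1) := Real.rpow_pos_of_pos ht0 _
      have hsplitt : t ^ (α - β) * t ^ (β - 1) = t ^ (α - 1) := by
        rw [← Real.rpow_add ht0]; ring_nf
      rw [← hsplitt]
      nlinarith [mul_le_mul_of_nonneg_right hstep2 htβ.le]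
  have h := anti ⟨hx, hxy⟩ ⟨hy0, le_refl y⟩ hxy
  simp only [hgdef] at h
  nlinarith [h]

theorem ratio_one_sub_rpow_weight_mono
    (f : ℝ → ℝ)
    (hf0 : ∀ θ ∈ Icc (0:ℝ) 1, 0 ≤ f θ)
    (hfint : IntervalIntegrable f volume 0 1)
    (δ α β : ℝ) (hδ0 : 0 < δ) (hδ1 : δ < 1)
    (hβ0 : 0 < β) (hβα : β < α) (hα1 : α ≤ 1)
    (hdenα : 0 < ∫ θ in (0:ℝ)..1, (1 - θ ^ α) * f θ)
    (hdenβ : 0 < ∫ θ in (0:ℝ)..1, (1 - θ ^ β) * f θ) :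
    (∫ θ in (0:ℝ)..δ, (1 - θ ^ α) * f θ) / (∫ θ in (0:ℝ)..1, (1 - θ ^ α) * f θ) ≤
      (∫ θ in (0:ℝ)..δ, (1 - θ ^ β) * f θ) / (∫ θ in (0:ℝ)..1, (1 - θ ^ β) * f θ) := by
  have hα0 : 0 < α := hβ0.trans hβα
  -- continuity of weights
  have c1 : Continuous fun t : ℝ => 1 - t ^ β :=
    continuous_const.sub
      (continuous_iff_continuousAt.mpr fun t => Real.continuousAt_rpow_const t β (Or.inr hβ0.le))
  have c2 : Continuous fun t : ℝ => 1 - t ^ α :=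
    continuous_const.sub
      (continuous_iff_continuousAt.mpr fun t => Real.continuousAt_rpow_const t α (Or.inr hα0.le))
  -- integrability on [0,1]
  have hIα : IntervalIntegrable (fun θ => (1 - θ ^ α) * f θ) volume 0 1 :=
    hfint.continuousOn_mul c2.continuousOn
  have hIβ : IntervalIntegrable (fun θ => (1 - θ ^ β) * f θ) volume 0 1 :=
    hfint.continuousOn_mul c1.continuousOn
  have hsub1 : uIcc (0:ℝ) δ ⊆ uIcc (0:ℝ) 1 := by
    apply uIcc_subset_uIcc <;> rw [uIcc_of_le (by norm_num : (0:ℝ) ≤ 1)] <;>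
      constructor <;> linarith
  have hsub2 : uIcc δ (1:ℝ) ⊆ uIcc (0:ℝ) 1 := by
    apply uIcc_subset_uIcc <;> rw [uIcc_of_le (by norm_num : (0:ℝ) ≤ 1)] <;>
      constructor <;> linarith
  have hIα1 : IntervalIntegrable (fun θ => (1 - θ ^ α) * f θ) volume 0 δ := hIα.mono_set hsub1
  have hIα2 : IntervalIntegrable (fun θ => (1 - θ ^ α) * f θ) volume δ 1 := hIα.mono_set hsub2
  have hIβ1 : IntervalIntegrable (fun θ => (1 - θ ^ β) * f θ) volume 0 δ := hIβ.mono_set hsub1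
  have hIβ2 : IntervalIntegrable (fun θ => (1 - θ ^ β) * f θ) volume δ 1 := hIβ.mono_set hsub2
  set Aδ := ∫ θ in (0:ℝ)..δ, (1 - θ ^ α) * f θ with hAδ
  set Ar := ∫ θ in δ..(1:ℝ), (1 - θ ^ α) * f θ with hAr
  set Bδ := ∫ θ in (0:ℝ)..δ, (1 - θ ^ β) * f θ with hBδ
  set Br := ∫ θ in δ..(1:ℝ), (1 - θ ^ β) * f θ with hBr
  have hAsplit : Aδ + Ar = ∫ θ in (0:ℝ)..1, (1 - θ ^ α) * f θ :=
    integral_add_adjacent_intervals hIα1 hIα2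
  have hBsplit : Bδ + Br = ∫ θ in (0:ℝ)..1, (1 - θ ^ β) * f θ :=
    integral_add_adjacent_intervals hIβ1 hIβ2
  -- positivity of weights at δ
  have hδα1 : δ ^ α < 1 := Real.rpow_lt_one hδ0.le hδ1 hα0
  have hδβ1 : δ ^ β < 1 := Real.rpow_lt_one hδ0.le hδ1 hβ0
  set p := 1 - δ ^ β with hp
  set q := 1 - δ ^ α with hq
  have hp0 : 0 < p := by simp [hp]; linarith
  have hq0 : 0 < q := by simp [hq]; linarith
  -- nonnegativity of the four pieces
  have wαnn : ∀ θ ∈ Icc (0:ℝ) 1, 0 ≤ (1 - θ ^ α) * f θ := by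
    intro θ hθ
    exact mul_nonneg (by linarith [Real.rpow_le_one hθ.1 hθ.2 hα0.le]) (hf0 θ hθ)
  have wβnn : ∀ θ ∈ Icc (0:ℝ) 1, 0 ≤ (1 - θ ^ β) * f θ := by
    intro θ hθ
    exact mul_nonneg (by linarith [Real.rpow_le_one hθ.1 hθ.2 hβ0.le]) (hf0 θ hθ)
  have hAδ0 : 0 ≤ Aδ := integral_nonneg hδ0.le fun θ hθ =>
    wαnn θ ⟨hθ.1, hθ.2.trans hδ1.le⟩
  have hAr0 : 0 ≤ Ar := integral_nonneg hδ1.le fun θ hθ =>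
    wαnn θ ⟨hδ0.le.trans hθ.1, hθ.2⟩
  have hBδ0 : 0 ≤ Bδ := integral_nonneg hδ0.le fun θ hθ =>
    wβnn θ ⟨hθ.1, hθ.2.trans hδ1.le⟩
  have hBr0 : 0 ≤ Br := integral_nonneg hδ1.le fun θ hθ =>
    wβnn θ ⟨hδ0.le.trans hθ.1, hθ.2⟩
  -- the two comparison inequalities
  have h1 : p * Aδ ≤ q * Bδ := by
    rw [hAδ, hBδ, ← intervalIntegral.integral_const_mul, ← intervalIntegral.integral_const_mul]
    apply integral_mono_on hδ0.le (hIα1.const_mul p) (hIβ1.const_mul q)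
    intro θ hθ
    have hk := rpow_key α β hβ0 hβα hθ.1 hθ.2 hδ1.le
    have hfθ : 0 ≤ f θ := hf0 θ ⟨hθ.1, hθ.2.trans hδ1.le⟩
    simp only [hp, hq]
    nlinarith [mul_le_mul_of_nonneg_right hk hfθ]
  have h2 : q * Br ≤ p * Ar := by
    rw [hAr, hBr, ← intervalIntegral.integral_const_mul, ← intervalIntegral.integral_const_mul]
    apply integral_mono_on hδ1.le (hIβ2.const_mul q) (hIα2.const_mul p)
    intro θ hθ
    have hk := rpow_key α β hβ0 hβα hδ0.le hθ.1 hθ.2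
    have hfθ : 0 ≤ f θ := hf0 θ ⟨hδ0.le.trans hθ.1, hθ.2⟩
    simp only [hp, hq]
    nlinarith [mul_le_mul_of_nonneg_right hk hfθ]
  -- combine
  rw [div_le_div_iff₀ hdenα hdenβ, ← hAsplit, ← hBsplit]
  have hmul : (p * Aδ) * (q * Br) ≤ (q * Bδ) * (p * Ar) :=
    mul_le_mul h1 h2 (mul_nonneg hq0.le hBr0) (mul_nonneg hq0.le hBδ0)
  have hpq : 0 < p * q := mul_pos hp0 hq0
  have hABr : Aδ * Br ≤ Bδ * Ar := by
    have h3 : p * q * (Aδ * Br) ≤ p * q * (Bδ * Ar) := by nlinarith [hmul]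
    exact le_of_mul_le_mul_left h3 hpq
  nlinarith [hABr]
end

section
/- For real numbers 0 < β < α ≤ 1, the function g(θ) = (1 − θ^β)/(1 − θ^α) is strictly decreasing on the open interval (0,1); equivalently, its derivative g′(θ) < 0 for all θ ∈ (0,1). -/
open Set Real

lemma key_ineq (α β θ : ℝ) (hβ0 : 0 < β) (hβα : β < α) (hθ0 : 0 < θ) (hθ1 : θ < 1) :
    α * θ ^ (α - 1) * (1 - θ ^ β) < β * θ ^ (β - 1) * (1 - θ ^ α) := by
  have hα0 : 0 < α := hβ0.trans hβα
  have hu0 : 0 < θ ^ β := rpow_pos_of_pos hθ0 β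
  have hu1 : θ ^ β < 1 := rpow_lt_one hθ0.le hθ1 hβ0
  have ha0 : 0 < θ ^ α := rpow_pos_of_pos hθ0 α
  have ha1 : θ ^ α < 1 := rpow_lt_one hθ0.le hθ1 hα0
  have hr : 1 < α / β := (one_lt_div hβ0).2 hβα
  set s : ℝ := (θ ^ β)⁻¹ - 1 with hs
  have hs0 : (0:ℝ) < s := by
    have : 1 < (θ ^ β)⁻¹ := one_lt_inv₀ hu0 |>.2 hu1
    simp only [hs]; linarith
  have hb := one_add_mul_self_lt_rpow_one_add (s := s) (by linarith) (ne_of_gt hs0) hr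
  have h1s : 1 + s = (θ ^ β)⁻¹ := by simp [hs]
  have hpow : ((θ ^ β)⁻¹) ^ (α / β) = (θ ^ α)⁻¹ := by
    rw [inv_rpow hu0.le, ← rpow_mul hθ0.le]
    congr 2
    field_simp
  rw [h1s, hpow] at hb
  -- multiply hb by θ^α
  have hab : θ ^ (α - β) * θ ^ β = θ ^ α := by rw [← rpow_add hθ0]; ring_nf
  have e1 : θ ^ α * (θ ^ β)⁻¹ = θ ^ (α - β) := by
    rw [← hab, mul_inv_cancel_right₀ hu0.ne']
  have h2 : θ ^ α * (1 + α / β * s) < θ ^ α * (θ ^ α)⁻¹ :=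
    mul_lt_mul_of_pos_left hb ha0
  rw [mul_inv_cancel₀ (ne_of_gt ha0)] at h2
  have hb' : θ ^ α + α / β * (θ ^ (α - β) - θ ^ α) < 1 := by
    have e4 : θ ^ α * s = θ ^ (α - β) - θ ^ α := by
      rw [hs, mul_sub, mul_one, e1]
    have : θ ^ α * (1 + α / β * s) = θ ^ α + α / β * (θ ^ (α - β) - θ ^ α) := by
      rw [mul_add, mul_one, mul_left_comm, e4]
    linarith [h2, this.symm.le]
  -- multiply by β
  have hb'' : β * θ ^ α + α * (θ ^ (α - β) - θ ^ α) < β := by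
    have h3 := mul_lt_mul_of_pos_left hb' hβ0
    have : β * (α / β) = α := by field_simp
    nlinarith [h3]
  -- multiply by θ^(β-1)
  have hp1 : 0 < θ ^ (β - 1) := rpow_pos_of_pos hθ0 _
  have e2 : θ ^ (β - 1) * θ ^ (α - β) = θ ^ (α - 1) := by
    rw [← rpow_add hθ0]; ring_nf
  have e3 : θ ^ (α - 1) * θ ^ β = θ ^ (β - 1) * θ ^ α := by
    rw [← rpow_add hθ0, ← rpow_add hθ0]; ring_nf
  nlinarith [mul_lt_mul_of_pos_left hb'' hp1, e2, e3]

theorem g_strictAntiOn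
    (α β : ℝ) (hβ0 : 0 < β) (hβα : β < α) (hα1 : α ≤ 1) :
    StrictAntiOn (fun θ : ℝ => (1 - θ ^ β) / (1 - θ ^ α)) (Ioo (0:ℝ) 1) := by
  have hα0 : 0 < α := hβ0.trans hβα
  have hden : ∀ x ∈ Ioo (0:ℝ) 1, 1 - x ^ α ≠ 0 := by
    intro x hx
    have : x ^ α < 1 := rpow_lt_one hx.1.le hx.2 hα0
    linarith
  apply strictAntiOn_of_deriv_neg (convex_Ioo 0 1)
  · apply ContinuousOn.div
    · exact continuousOn_const.sub (continuousOn_id.rpow_const fun x _ => Or.inr hβ0.le)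
    · exact continuousOn_const.sub (continuousOn_id.rpow_const fun x _ => Or.inr hα0.le)
    · exact hden
  · intro x hx
    rw [interior_Ioo] at hx
    have hxa : x ^ α < 1 := rpow_lt_one hx.1.le hx.2 hα0
    have h1 : HasDerivAt (fun θ : ℝ => 1 - θ ^ β) (-(β * x ^ (β - 1))) x :=
      (Real.hasDerivAt_rpow_const (Or.inl hx.1.ne')).const_sub 1
    have h2 : HasDerivAt (fun θ : ℝ => 1 - θ ^ α) (-(α * x ^ (α - 1))) x :=
      (Real.hasDerivAt_rpow_const (Or.inl hx.1.ne')).const_sub 1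
    have h : HasDerivAt (fun θ : ℝ => (1 - θ ^ β) / (1 - θ ^ α)) _ x := h1.div h2 (hden x hx)
    rw [h.deriv]
    apply div_neg_of_neg_of_pos
    · have := key_ineq α β x hβ0 hβα hx.1 hx.2
      nlinarith [this]
    · exact pow_pos (by linarith) 2
end
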